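/- Assume that for all n ∈ ℤ, γ1, γ2 ∈ Γ, u ∈ V_{γ1}, v ∈ V_{γ2} one has the skew-symmetry identity Y_n(u, v) = β(γ1, γ2) · ∑_{j≥0} (−1)^{n+j+1} (1/j!) D^j(Y_{n+j}(v, u)) and the twisted derivation identity D(Y_n(u, v)) − β(γ1, γ2) · ∑_{j≥0} (−1)^{n+j+1} (1/j!) D^j(Y_{n+j}(D(v), u)) = −n·Y_{n−1}(u, v). If in addition β(γ1, γ2) = β(γ1, γ2 − 2γ0) for all γ1, γ2 ∈ Γ, then D(Y_n(u, v)) − Y_n(u, D(v)) = −n·Y_{n−1}(u, v) for all n ∈ ℤ and all u, v ∈ V (the component form of D∘Y(x) − Y(x)(id⊗D) = (d/dx)Y(x)). -/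

import Mathlib

/-- The generalized binomial coefficient `binom(a, i) = a(a-1)⋯(a-i+1)/i!`
for `a : ℤ`, `i : ℕ`; it is an integer. -/
def zbinom (a : ℤ) (i : ℕ) : ℤ :=
  if 0 ≤ a then (a.toNat.choose i : ℤ)
  else (-1 : ℤ) ^ i * ((((i : ℤ) - a - 1).toNat).choose i : ℤ)

/-- A `(G_Γ, β, γ0)`-vertex algebra in component form, *without* the
derivation axiom (which is to be derived): a `Γ`-graded `k`-vector space `V`
(internal direct sum of the subspaces `Vg γ`), bilinear products
`Y n : V → V → V` of degree `n • γ0`, and a vacuum vector `vac ∈ V_0`,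
satisfying truncation, vacuum, creation and the `β`-Jacobi identity. -/
structure PreVA (k : Type*) [Field k] (Γ : Type*) [AddCommGroup Γ] [DecidableEq Γ]
    (γ0 : Γ) (β : Γ → Γ → k)
    (V : Type*) [AddCommGroup V] [Module k V] where
  Vg : Γ → Submodule k V
  internal : DirectSum.IsInternal Vg
  Y : ℤ → V →ₗ[k] V →ₗ[k] V
  vac : V
  vac_mem : vac ∈ Vg 0
  grading : ∀ (n : ℤ) (γ1 γ2 : Γ) (u v : V), u ∈ Vg γ1 → v ∈ Vg γ2 →
      Y n u v ∈ Vg (γ1 + γ2 + n • γ0)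
  truncation : ∀ u v : V, ∃ N : ℤ, ∀ n : ℤ, N ≤ n → Y n u v = 0
  vacuum_left : ∀ v : V, Y (-1) vac v = v
  vacuum_left' : ∀ n : ℤ, n ≠ -1 → ∀ v : V, Y n vac v = 0
  creation : ∀ v : V, Y (-1) v vac = v
  creation' : ∀ n : ℤ, 0 ≤ n → ∀ v : V, Y n v vac = 0
  jacobi : ∀ (l m n : ℤ) (γ1 γ2 : Γ) (u v w : V), u ∈ Vg γ1 → v ∈ Vg γ2 →
      (∑ᶠ i : ℕ, (((-1 : k) ^ i * (zbinom l i : k)) •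
          Y (m + l - (i : ℤ)) u (Y (n + (i : ℤ)) v w)))
        - ((-1 : k) ^ l * β γ1 γ2) •
            (∑ᶠ i : ℕ, (((-1 : k) ^ i * (zbinom l i : k)) •
              Y (n + l - (i : ℤ)) v (Y (m + (i : ℤ)) u w)))
        = ∑ᶠ i : ℕ, ((zbinom m i : k) •
            Y (m + n - (i : ℤ)) (Y (l + (i : ℤ)) u v) w)

/-!
Apply skew-symmetry to `u` and `D v`: since `D` lowers the degree by `2γ0`, the resulting factor
`β(γ1, γ2 - 2γ0)` equals `β(γ1, γ2)`, so the sum in the twisted derivation identity is exactly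
`Y_n(u, D v)`. This gives the claim for homogeneous `u, v`, and both sides are bilinear.
-/

theorem LinearMap.ext₂_of_iSup_eq_top {R M N P ι κ : Type*} [CommSemiring R]
    [AddCommMonoid M] [AddCommMonoid N] [AddCommMonoid P] [Module R M] [Module R N] [Module R P]
    {p : ι → Submodule R M} {q : κ → Submodule R N} (hp : ⨆ i, p i = ⊤) (hq : ⨆ j, q j = ⊤)
    {B C : M →ₗ[R] N →ₗ[R] P} (h : ∀ i j, ∀ x ∈ p i, ∀ y ∈ q j, B x y = C x y) : B = C := by
  refine LinearMap.ext_on (s := ⋃ i, (p i : Set M)) (by rw [← Submodule.iSup_eq_span, hp]) ?_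
  intro x hx
  obtain ⟨i, hx⟩ := Set.mem_iUnion.mp hx
  refine LinearMap.ext_on (s := ⋃ j, (q j : Set N)) (by rw [← Submodule.iSup_eq_span, hq]) ?_
  intro y hy
  obtain ⟨j, hy⟩ := Set.mem_iUnion.mp hy
  exact h i j x hx y hy

namespace PreVA

variable {k Γ V : Type*} [Field k] [AddCommGroup Γ] [DecidableEq Γ] [AddCommGroup V] [Module k V]
  {γ0 : Γ} {β : Γ → Γ → k} (A : PreVA k Γ γ0 β V)

def D : V →ₗ[k] V := (A.Y (-2)).flip A.vac

theorem D_mem {γ : Γ} {v : V} (hv : v ∈ A.Vg γ) : A.D v ∈ A.Vg (γ - (2 : ℤ) • γ0) := by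
  have h := A.grading (-2) γ 0 v A.vac hv A.vac_mem
  rwa [add_zero, neg_smul, ← sub_eq_add_neg] at h

theorem iSup_Vg_eq_top : ⨆ γ, A.Vg γ = ⊤ := A.internal.submodule_iSup_eq_top

end PreVA

theorem statement10 {k Γ V : Type*} [Field k] [AddCommGroup Γ]
    [DecidableEq Γ] [AddCommGroup V] [Module k V]
    (γ0 : Γ) (β : Γ → Γ → k) (A : PreVA k Γ γ0 β V)
    (hskew : ∀ (n : ℤ) (γ1 γ2 : Γ) (u v : V), u ∈ A.Vg γ1 → v ∈ A.Vg γ2 →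
      A.Y n u v = β γ1 γ2 •
        ∑ᶠ j : ℕ, (((-1 : k) ^ (n + (j : ℤ) + 1) * ((j.factorial : k))⁻¹) •
          (fun x => A.Y (-2) x A.vac)^[j] (A.Y (n + (j : ℤ)) v u)))
    (hder : ∀ (n : ℤ) (γ1 γ2 : Γ) (u v : V), u ∈ A.Vg γ1 → v ∈ A.Vg γ2 →
      A.Y (-2) (A.Y n u v) A.vac - β γ1 γ2 •
          ∑ᶠ j : ℕ, (((-1 : k) ^ (n + (j : ℤ) + 1) * ((j.factorial : k))⁻¹) •
            (fun x => A.Y (-2) x A.vac)^[j]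
              (A.Y (n + (j : ℤ)) (A.Y (-2) v A.vac) u))
        = (-n) • A.Y (n - 1) u v)
    (hβ2 : ∀ γ1 γ2 : Γ, β γ1 γ2 = β γ1 (γ2 - (2 : ℤ) • γ0)) :
    ∀ (n : ℤ) (u v : V),
      A.Y (-2) (A.Y n u v) A.vac - A.Y n u (A.Y (-2) v A.vac)
        = (-n) • A.Y (n - 1) u v := by
  intro n
  have homogeneous : ∀ γ1 γ2, ∀ u ∈ A.Vg γ1, ∀ v ∈ A.Vg γ2,
      A.D (A.Y n u v) - A.Y n u (A.D v) = (-n) • A.Y (n - 1) u v := by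
    intro γ1 γ2 u hu v hv
    rw [hskew n γ1 _ u _ hu (A.D_mem hv), ← hβ2]
    exact hder n γ1 γ2 u v hu hv
  have bilinear : (A.Y n).compr₂ A.D - (A.Y n).compl₂ A.D = (-n) • A.Y (n - 1) :=
    LinearMap.ext₂_of_iSup_eq_top A.iSup_Vg_eq_top A.iSup_Vg_eq_top homogeneous
  exact fun u v => LinearMap.congr_fun₂ bilinear u v
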